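/- arXiv:2504.18178 — 5 statements merged into one kernel-verified Lean document; each statement's English description precedes it below -/
import Mathlib

section
/- Let d, n be positive integers and let Ω₁, …, Ωₙ be nonempty compact convex subsets of ℝ^d. Let X be the convex hull of ⋃ᵢ Ωᵢ, V = Ω₁ × ⋯ × Ωₙ, and Y = { ((y₁,s₁),…,(yₙ,sₙ)) ∈ (ℝ^d × ℝ)^n : ‖yᵢ‖ ≤ sᵢ for all i, and ∑ᵢ sᵢ = 1 }. Define f(x, v, y) = ∑ᵢ ⟨x − vᵢ, yᵢ⟩. Then the minimax value min over (x,v) ∈ X × V of max over y ∈ Y of f(x,v,y) equals r* := inf over x ∈ ℝ^d of max over i of dist(x, Ωᵢ) (the smallest intersecting ball radius). -/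
/-!
For fixed `(x, v)` the inner maximum is the dual of an `ℓ¹`-sum of norms, i.e. `maxᵢ ‖x - vᵢ‖`,
which dominates `maxᵢ dist(x, Ωᵢ)`. Conversely, given any `x`, let `vᵢ` be its nearest point in
`Ωᵢ` and `u` its projection onto the convex hull of the `vᵢ`; the projection onto a convex set
does not increase distances to points of that set, so `‖u - vᵢ‖ ≤ dist(x, Ωᵢ)`, and `u ∈ X`.
-/

open Metric Set Finset
open scoped RealInnerProductSpace

variable {ι E : Type*} [Fintype ι] [NormedAddCommGroup E] [InnerProductSpace ℝ E]

theorem exists_norm_le_one_inner_eq_norm (a : E) : ∃ w : E, ‖w‖ ≤ 1 ∧ ⟪a, w⟫ = ‖a‖ := by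
  rcases eq_or_ne a 0 with rfl | ha
  · exact ⟨0, by simp⟩
  · refine ⟨‖a‖⁻¹ • a, by simp [norm_smul, ha], ?_⟩
    rw [real_inner_smul_right, real_inner_self_eq_norm_sq]
    field_simp

theorem iSup_sum_inner_eq_iSup_norm [Nonempty ι] (a : ι → E) :
    (⨆ y : {y : ι → E × ℝ // (∀ i, ‖(y i).1‖ ≤ (y i).2) ∧ ∑ i, (y i).2 = 1},
      ∑ i, ⟪a i, (y.1 i).1⟫) = ⨆ i, ‖a i‖ := by
  classical
  have hbdd : BddAbove (range fun i => ‖a i‖) := (finite_range _).bddAbove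
  have hM : 0 ≤ ⨆ i, ‖a i‖ := Real.iSup_nonneg fun i => norm_nonneg _
  have hle : ∀ y : {y : ι → E × ℝ // (∀ i, ‖(y i).1‖ ≤ (y i).2) ∧ ∑ i, (y i).2 = 1},
      ∑ i, ⟪a i, (y.1 i).1⟫ ≤ ⨆ i, ‖a i‖ := by
    rintro ⟨y, hy, hsum⟩
    calc ∑ i, ⟪a i, (y i).1⟫ ≤ ∑ i, (⨆ j, ‖a j‖) * (y i).2 := by
          gcongr with i
          exact (real_inner_le_norm _ _).trans
            (mul_le_mul (le_ciSup hbdd i) (hy i) (norm_nonneg _) hM)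
      _ = ⨆ i, ‖a i‖ := by rw [← Finset.mul_sum, hsum, mul_one]
  have hattained : ∀ i, ∃ y : {y : ι → E × ℝ // (∀ i, ‖(y i).1‖ ≤ (y i).2) ∧ ∑ i, (y i).2 = 1},
      ∑ j, ⟪a j, (y.1 j).1⟫ = ‖a i‖ := by
    intro i
    obtain ⟨w, hw, hwa⟩ := exists_norm_le_one_inner_eq_norm (a i)
    refine ⟨⟨fun j => ((Pi.single i w : ι → E) j, (Pi.single i 1 : ι → ℝ) j), fun j => ?_, by simp⟩, ?_⟩
    · rcases eq_or_ne j i with rfl | hj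
      · simpa using hw
      · simp [hj]
    · rw [Fintype.sum_eq_single i fun j hj => by simp [hj]]
      simpa using hwa
  have : Nonempty {y : ι → E × ℝ // (∀ i, ‖(y i).1‖ ≤ (y i).2) ∧ ∑ i, (y i).2 = 1} :=
    (hattained (Classical.arbitrary ι)).nonempty
  refine le_antisymm (ciSup_le hle) (ciSup_le fun i => ?_)
  obtain ⟨y, hy⟩ := hattained i
  exact hy ▸ le_ciSup ⟨_, forall_mem_range.2 hle⟩ y

theorem exists_mem_forall_norm_sub_le {K : Set E} (hne : K.Nonempty) (hcomplete : IsComplete K)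
    (hconv : Convex ℝ K) (x : E) : ∃ u ∈ K, ∀ w ∈ K, ‖u - w‖ ≤ ‖x - w‖ := by
  obtain ⟨u, hu, hmin⟩ := exists_norm_eq_iInf_of_complete_convex hne hcomplete hconv x
  refine ⟨u, hu, fun w hw => ?_⟩
  have hobtuse := (norm_eq_iInf_iff_real_inner_le_zero hconv hu).mp hmin w hw
  have hsplit := norm_add_sq_real (x - u) (u - w)
  rw [sub_add_sub_cancel, ← neg_sub w u, inner_neg_right, norm_neg, norm_sub_rev w u] at hsplit
  nlinarith [norm_nonneg (u - w), norm_nonneg (x - w), sq_nonneg ‖x - u‖]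

theorem exists_mem_convexHull_forall_norm_sub_le_infDist {Ω : ι → Set E}
    (hne : ∀ i, (Ω i).Nonempty) (hcpt : ∀ i, IsCompact (Ω i)) [Nonempty ι] (x : E) :
    ∃ u ∈ convexHull ℝ (⋃ i, Ω i), ∃ v : ι → E, (∀ i, v i ∈ Ω i) ∧
      ∀ i, ‖u - v i‖ ≤ infDist x (Ω i) := by
  choose v hvΩ hvx using fun i => (hcpt i).exists_infDist_eq_dist (hne i) x
  obtain ⟨u, hu, hcloser⟩ := exists_mem_forall_norm_sub_le (range_nonempty v).convexHull
    ((finite_range v).isCompact_convexHull ℝ).isComplete (convex_convexHull ℝ _) x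
  refine ⟨u, convexHull_mono (range_subset_iff.2 fun i => mem_iUnion_of_mem i (hvΩ i)) hu,
    v, hvΩ, fun i => ?_⟩
  rw [hvx, dist_eq_norm]
  exact hcloser _ (subset_convexHull ℝ _ (mem_range_self i))

theorem sib_game_value_general (d n : ℕ)
    (Ω : Fin n → Set (EuclideanSpace ℝ (Fin d)))
    (hne : ∀ i, (Ω i).Nonempty) (hcpt : ∀ i, IsCompact (Ω i)) :
    (⨅ p : {p : (EuclideanSpace ℝ (Fin d)) × (Fin n → EuclideanSpace ℝ (Fin d)) //
        p.1 ∈ convexHull ℝ (⋃ i, Ω i) ∧ ∀ i, p.2 i ∈ Ω i},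
      ⨆ y : {y : Fin n → (EuclideanSpace ℝ (Fin d)) × ℝ //
        (∀ i, ‖(y i).1‖ ≤ (y i).2) ∧ (∑ i, (y i).2) = 1},
        ∑ i, (inner ℝ (p.1.1 - p.1.2 i) ((y.1 i).1) : ℝ)) =
    ⨅ x : EuclideanSpace ℝ (Fin d), ⨆ i, Metric.infDist x (Ω i) := by
  rcases isEmpty_or_nonempty (Fin n) with hn | hn
  · simp
  simp only [iSup_sum_inner_eq_iSup_norm]
  have : Nonempty {p : EuclideanSpace ℝ (Fin d) × (Fin n → EuclideanSpace ℝ (Fin d)) //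
      p.1 ∈ convexHull ℝ (⋃ i, Ω i) ∧ ∀ i, p.2 i ∈ Ω i} := by
    obtain ⟨u, hu, v, hv, -⟩ := exists_mem_convexHull_forall_norm_sub_le_infDist hne hcpt 0
    exact ⟨⟨(u, v), hu, hv⟩⟩
  refine le_antisymm (ciInf_mono_of_forall_exists ?_ fun x => ?_)
    (ciInf_mono_of_forall_exists ?_ fun p => ⟨p.1.1, ciSup_mono (finite_range _).bddAbove
      fun i => dist_eq_norm p.1.1 (p.1.2 i) ▸ infDist_le_dist_of_mem (p.2.2 i)⟩)
  · exact ⟨0, forall_mem_range.2 fun p => Real.iSup_nonneg fun i => norm_nonneg _⟩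
  · obtain ⟨u, hu, v, hv, hle⟩ := exists_mem_convexHull_forall_norm_sub_le_infDist hne hcpt x
    exact ⟨⟨(u, v), hu, hv⟩, ciSup_mono (finite_range _).bddAbove hle⟩
  · exact ⟨0, forall_mem_range.2 fun x => Real.iSup_nonneg fun i => infDist_nonneg⟩

/-- **SIB as a zero-sum game (value).** The minimax value of the SIB game,
`min_{(x,v) ∈ X × V} max_{y ∈ Y} ∑ i ⟪x - vᵢ, yᵢ⟫`, equals the smallest
intersecting ball radius `r* = inf_x max_i dist(x, Ωᵢ)`. -/
theorem sib_game_value (d n : ℕ) (hd : 0 < d) (hn : 0 < n)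
    (Ω : Fin n → Set (EuclideanSpace ℝ (Fin d)))
    (hne : ∀ i, (Ω i).Nonempty) (hcpt : ∀ i, IsCompact (Ω i))
    (hconv : ∀ i, Convex ℝ (Ω i)) :
    (⨅ p : {p : (EuclideanSpace ℝ (Fin d)) × (Fin n → EuclideanSpace ℝ (Fin d)) //
        p.1 ∈ convexHull ℝ (⋃ i, Ω i) ∧ ∀ i, p.2 i ∈ Ω i},
      ⨆ y : {y : Fin n → (EuclideanSpace ℝ (Fin d)) × ℝ //
        (∀ i, ‖(y i).1‖ ≤ (y i).2) ∧ (∑ i, (y i).2) = 1},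
        ∑ i, (inner ℝ (p.1.1 - p.1.2 i) ((y.1 i).1) : ℝ)) =
    ⨅ x : EuclideanSpace ℝ (Fin d), ⨆ i, Metric.infDist x (Ω i) :=
  sib_game_value_general d n Ω hne hcpt
end

section
/- Let d, n be positive integers and let Ω₁, …, Ωₙ be nonempty compact convex subsets of ℝ^d. Let X be the convex hull of ⋃ᵢ Ωᵢ, V = Ω₁ × ⋯ × Ωₙ, Y = { ((y₁,s₁),…,(yₙ,sₙ)) : ‖yᵢ‖ ≤ sᵢ for all i, ∑ᵢ sᵢ = 1 }, and f(x, v, y) = ∑ᵢ ⟨x − vᵢ, yᵢ⟩. Let r* = inf over x ∈ ℝ^d of max over i of dist(x, Ωᵢ). If (x*, v₁*, …, vₙ*, y*) is a Nash equilibrium of the game min over X × V, max over Y of f, then f(x*, v*, y*) = r*, and for every i, vᵢ* lies in the closed ball of center x* and radius r* (i.e., ‖x* − vᵢ*‖ ≤ r*), so the closed ball B(x*, r*) intersects every Ωᵢ. -/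
/-!
Against `(x*, v*)` the maximizer can put all its weight on one index `i` in the direction of
`x* - vᵢ*`, so the equilibrium value `F` dominates every `‖x* - vᵢ*‖`, hence every
`dist(x*, Ωᵢ)`. Conversely, given any `x`, let `cᵢ ∈ Ωᵢ` be nearest to `x` and `p` the projection
of `x` onto the closure of `X`. Projecting onto a closed convex set brings `x` closer to each of
its points, so the optimality of `(x*, v*)` gives
`F ≤ f(p, c, y*) ≤ maxᵢ ‖p - cᵢ‖ ≤ maxᵢ dist(x, Ωᵢ)`. Thus `F = r*`, and `‖x* - vᵢ*‖ ≤ F = r*`.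
-/

open Metric RealInnerProductSpace

section

variable {E ι : Type*} [NormedAddCommGroup E] [InnerProductSpace ℝ E] [Fintype ι]

theorem inner_normalize_self (x : E) : ⟪x, NormedSpace.normalize x⟫ = ‖x‖ := by
  by_cases hx : x = 0
  · simp [hx]
  · rw [NormedSpace.normalize, real_inner_smul_right, real_inner_self_eq_norm_sq]
    field_simp

theorem norm_normalize_le_one (x : E) : ‖NormedSpace.normalize x‖ ≤ 1 := by
  by_cases hx : x = 0
  · simp [hx]
  · exact (NormedSpace.norm_normalize hx).le

theorem IsComplete.exists_mem_forall_dist_le {K : Set E} (hK : IsComplete K) (hKc : Convex ℝ K)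
    (hne : K.Nonempty) (x : E) : ∃ p ∈ K, ∀ w ∈ K, dist p w ≤ dist x w := by
  obtain ⟨p, hpK, hp⟩ := exists_norm_eq_iInf_of_complete_convex hne hK hKc x
  refine ⟨p, hpK, fun w hw => ?_⟩
  have hobtuse : ⟪x - p, w - p⟫ ≤ 0 := (norm_eq_iInf_iff_real_inner_le_zero hKc hpK).mp hp w hw
  have hsplit : ‖x - w‖ ^ 2 = ‖x - p‖ ^ 2 - 2 * ⟪x - p, w - p⟫ + ‖p - w‖ ^ 2 := by
    rw [show x - w = (x - p) - (w - p) by abel, norm_sub_sq_real, ← norm_neg (w - p), neg_sub]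
  rw [dist_eq_norm, dist_eq_norm, ← sq_le_sq₀ (norm_nonneg _) (norm_nonneg _)]
  nlinarith [sq_nonneg ‖x - p‖]

theorem sum_inner_le_of_norm_le {a : ι → E} {y : ι → E × ℝ} {M : ℝ} (ha : ∀ i, ‖a i‖ ≤ M)
    (hy₁ : ∀ i, ‖(y i).1‖ ≤ (y i).2) (hy₂ : ∑ i, (y i).2 = 1) :
    ∑ i, ⟪a i, (y i).1⟫ ≤ M :=
  calc ∑ i, ⟪a i, (y i).1⟫ ≤ ∑ i, M * (y i).2 := by
        gcongr with i
        exact (real_inner_le_norm _ _).trans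
          (mul_le_mul (ha i) (hy₁ i) (norm_nonneg _) ((norm_nonneg _).trans (ha i)))
    _ = M := by rw [← Finset.mul_sum, hy₂, mul_one]

theorem norm_le_of_forall_sum_inner_le {a : ι → E} {F : ℝ}
    (h : ∀ y : ι → E × ℝ, (∀ i, ‖(y i).1‖ ≤ (y i).2) → ∑ i, (y i).2 = 1 →
      ∑ i, ⟪a i, (y i).1⟫ ≤ F) (i : ι) :
    ‖a i‖ ≤ F := by
  classical
  let y : ι → E × ℝ := Pi.single i (NormedSpace.normalize (a i), 1)
  have hy₁ : ∀ j, ‖(y j).1‖ ≤ (y j).2 := by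
    intro j
    rcases eq_or_ne j i with rfl | hj
    · simpa [y] using norm_normalize_le_one (a j)
    · simp [y, hj]
  have hy₂ : ∑ j, (y j).2 = 1 := by simp [y, Pi.single_apply, apply_ite Prod.snd]
  have hval : ∑ j, ⟪a j, (y j).1⟫ = ‖a i‖ := by
    rw [Finset.sum_eq_single i (fun j _ hj => by simp [y, hj]) (by simp)]
    simpa [y] using inner_normalize_self (a i)
  exact hval ▸ h y hy₁ hy₂


theorem le_iSup_infDist_of_forall_le_sum_inner [CompleteSpace E] {Ω : ι → Set E} {X : Set E}
    (hcpt : ∀ i, IsCompact (Ω i)) (hne : ∀ i, (Ω i).Nonempty) (hΩX : ∀ i, Ω i ⊆ X)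
    (hXne : X.Nonempty) (hXc : Convex ℝ X) {y : ι → E × ℝ} (hy₁ : ∀ i, ‖(y i).1‖ ≤ (y i).2)
    (hy₂ : ∑ i, (y i).2 = 1) {F : ℝ}
    (hF : ∀ x (v : ι → E), x ∈ X → (∀ i, v i ∈ Ω i) → F ≤ ∑ i, ⟪x - v i, (y i).1⟫) (x : E) :
    F ≤ ⨆ i, infDist x (Ω i) := by
  choose c hcΩ hc using fun i => (hcpt i).exists_infDist_eq_dist (hne i) x
  obtain ⟨p, hpX, hp⟩ := isClosed_closure.isComplete.exists_mem_forall_dist_le hXc.closure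
    hXne.closure x
  have hFp : F ≤ ∑ i, ⟪p - c i, (y i).1⟫ := by
    have hclosed : IsClosed {z | F ≤ ∑ i, ⟪z - c i, (y i).1⟫} :=
      isClosed_le continuous_const (by fun_prop)
    exact closure_minimal (fun z hz => hF z c hz hcΩ) hclosed hpX
  refine hFp.trans (sum_inner_le_of_norm_le (fun i => ?_) hy₁ hy₂)
  calc ‖p - c i‖ = dist p (c i) := (dist_eq_norm _ _).symm
    _ ≤ dist x (c i) := hp (c i) (subset_closure (hΩX i (hcΩ i)))
    _ = infDist x (Ω i) := (hc i).symm
    _ ≤ ⨆ i, infDist x (Ω i) := le_ciSup (f := fun i => infDist x (Ω i)) (Set.finite_range _).bddAbove i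

end

theorem sib_game_nash_gives_sib_general (d n : ℕ) (hn : 0 < n)
    (Ω : Fin n → Set (EuclideanSpace ℝ (Fin d)))
    (hne : ∀ i, (Ω i).Nonempty) (hcpt : ∀ i, IsCompact (Ω i))
    (xs : EuclideanSpace ℝ (Fin d)) (vs : Fin n → EuclideanSpace ℝ (Fin d))
    (ys : Fin n → (EuclideanSpace ℝ (Fin d)) × ℝ)
    (hxs : xs ∈ convexHull ℝ (⋃ i, Ω i)) (hvs : ∀ i, vs i ∈ Ω i)
    (hys₁ : ∀ i, ‖(ys i).1‖ ≤ (ys i).2) (hys₂ : (∑ i, (ys i).2) = 1)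
    (hmin : ∀ (x : EuclideanSpace ℝ (Fin d)) (v : Fin n → EuclideanSpace ℝ (Fin d)),
      x ∈ convexHull ℝ (⋃ i, Ω i) → (∀ i, v i ∈ Ω i) →
      (∑ i, (inner ℝ (xs - vs i) ((ys i).1) : ℝ)) ≤ ∑ i, (inner ℝ (x - v i) ((ys i).1) : ℝ))
    (hmax : ∀ y : Fin n → (EuclideanSpace ℝ (Fin d)) × ℝ,
      (∀ i, ‖(y i).1‖ ≤ (y i).2) → (∑ i, (y i).2) = 1 →
      (∑ i, (inner ℝ (xs - vs i) ((y i).1) : ℝ)) ≤ ∑ i, (inner ℝ (xs - vs i) ((ys i).1) : ℝ)) :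
    (∑ i, (inner ℝ (xs - vs i) ((ys i).1) : ℝ)) =
      (⨅ x : EuclideanSpace ℝ (Fin d), ⨆ i, Metric.infDist x (Ω i)) ∧
    (∀ i, vs i ∈ Metric.closedBall xs
      (⨅ x : EuclideanSpace ℝ (Fin d), ⨆ i, Metric.infDist x (Ω i))) ∧
    (∀ i, (Metric.closedBall xs
      (⨅ x : EuclideanSpace ℝ (Fin d), ⨆ i, Metric.infDist x (Ω i)) ∩ Ω i).Nonempty) := by
  have : Nonempty (Fin n) := ⟨⟨0, hn⟩⟩
  set F := ∑ i, ⟪xs - vs i, (ys i).1⟫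
  set r := ⨅ x : EuclideanSpace ℝ (Fin d), ⨆ i, infDist x (Ω i)
  have hdist_le : ∀ i, dist xs (vs i) ≤ F := fun i =>
    (dist_eq_norm _ _).trans_le (norm_le_of_forall_sum_inner_le hmax i)
  have hF_le : F ≤ r := le_ciInf <| le_iSup_infDist_of_forall_le_sum_inner hcpt hne
    (fun i => (Set.subset_iUnion Ω i).trans (subset_convexHull ℝ _)) ⟨xs, hxs⟩
    (convex_convexHull ℝ _) hys₁ hys₂ hmin
  have hr_le : r ≤ F :=
    calc r ≤ ⨆ i, infDist xs (Ω i) :=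
          ciInf_le ⟨0, Set.forall_mem_range.2 fun _ => Real.iSup_nonneg fun _ => infDist_nonneg⟩ xs
      _ ≤ F := ciSup_le fun i => (infDist_le_dist_of_mem (hvs i)).trans (hdist_le i)
  have hFr : F = r := hF_le.antisymm hr_le
  have hball : ∀ i, vs i ∈ closedBall xs r := fun i => by
    rw [mem_closedBall, dist_comm, ← hFr]
    exact hdist_le i
  exact ⟨hFr, hball, fun i => ⟨vs i, hball i, hvs i⟩⟩

/-- **SIB game: Nash equilibria give the SIB.** If `(x*, v*, y*)` is a Nash equilibrium of
the SIB game, then the value `f(x*, v*, y*)` equals the SIB radius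
`r* = inf_x max_i dist(x, Ωᵢ)`, each `vᵢ*` lies in the closed ball `B(x*, r*)`,
and hence `B(x*, r*)` intersects every `Ωᵢ`. -/
theorem sib_game_nash_gives_sib (d n : ℕ) (hd : 0 < d) (hn : 0 < n)
    (Ω : Fin n → Set (EuclideanSpace ℝ (Fin d)))
    (hne : ∀ i, (Ω i).Nonempty) (hcpt : ∀ i, IsCompact (Ω i))
    (hconv : ∀ i, Convex ℝ (Ω i))
    (xs : EuclideanSpace ℝ (Fin d)) (vs : Fin n → EuclideanSpace ℝ (Fin d))
    (ys : Fin n → (EuclideanSpace ℝ (Fin d)) × ℝ)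
    (hxs : xs ∈ convexHull ℝ (⋃ i, Ω i)) (hvs : ∀ i, vs i ∈ Ω i)
    (hys₁ : ∀ i, ‖(ys i).1‖ ≤ (ys i).2) (hys₂ : (∑ i, (ys i).2) = 1)
    (hmin : ∀ (x : EuclideanSpace ℝ (Fin d)) (v : Fin n → EuclideanSpace ℝ (Fin d)),
      x ∈ convexHull ℝ (⋃ i, Ω i) → (∀ i, v i ∈ Ω i) →
      (∑ i, (inner ℝ (xs - vs i) ((ys i).1) : ℝ)) ≤ ∑ i, (inner ℝ (x - v i) ((ys i).1) : ℝ))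
    (hmax : ∀ y : Fin n → (EuclideanSpace ℝ (Fin d)) × ℝ,
      (∀ i, ‖(y i).1‖ ≤ (y i).2) → (∑ i, (y i).2) = 1 →
      (∑ i, (inner ℝ (xs - vs i) ((y i).1) : ℝ)) ≤ ∑ i, (inner ℝ (xs - vs i) ((ys i).1) : ℝ)) :
    (∑ i, (inner ℝ (xs - vs i) ((ys i).1) : ℝ)) =
      (⨅ x : EuclideanSpace ℝ (Fin d), ⨆ i, Metric.infDist x (Ω i)) ∧
    (∀ i, vs i ∈ Metric.closedBall xs
      (⨅ x : EuclideanSpace ℝ (Fin d), ⨆ i, Metric.infDist x (Ω i))) ∧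
    (∀ i, (Metric.closedBall xs
      (⨅ x : EuclideanSpace ℝ (Fin d), ⨆ i, Metric.infDist x (Ω i)) ∩ Ω i).Nonempty) :=
  sib_game_nash_gives_sib_general d n hn Ω hne hcpt xs vs ys hxs hvs hys₁ hys₂ hmin hmax
end

section
/- Let d, n be positive integers and let Ω₁, …, Ωₙ be nonempty compact convex subsets of ℝ^d. Then the infimum r* = inf over x ∈ ℝ^d of max over i of dist(x, Ωᵢ) is attained, and moreover it is attained at some point x* belonging to the convex hull of ⋃ᵢ Ωᵢ. -/
/-!
Let `K` be the convex hull of `⋃ i, Ωᵢ`; it is compact, being built from finitely many compact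
convex sets by convex joins. The metric projection `y` of any point `x` onto the convex set `K`
is at least as close as `x` to every point of `K`, hence to every `Ωᵢ ⊆ K`, so the objective
`x ↦ maxᵢ dist(x, Ωᵢ)` does not increase under projection. Its minimum over the compact set `K`
is therefore a global minimum.
-/

open Metric Set

section ConvexHull

variable {E : Type*} [AddCommGroup E] [Module ℝ E] [TopologicalSpace E] [ContinuousAdd E]
  [ContinuousSMul ℝ E]

theorem IsCompact.convexJoin {s t : Set E} (hs : IsCompact s) (ht : IsCompact t) :
    IsCompact (_root_.convexJoin ℝ s t) := by
  have h : _root_.convexJoin ℝ s t =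
      (fun p : E × E × ℝ => (1 - p.2.2) • p.1 + p.2.2 • p.2.1) '' (s ×ˢ t ×ˢ Icc 0 1) := by
    ext x
    simp only [mem_convexJoin, segment_eq_image, mem_image, mem_prod, Prod.exists]
    constructor
    · rintro ⟨a, ha, b, hb, θ, hθ, rfl⟩
      exact ⟨a, b, θ, ⟨ha, hb, hθ⟩, rfl⟩
    · rintro ⟨a, b, θ, ⟨ha, hb, hθ⟩, rfl⟩
      exact ⟨a, ha, b, hb, θ, hθ, rfl⟩
  rw [h]
  exact (hs.prod (ht.prod isCompact_Icc)).image (by fun_prop)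

theorem IsCompact.convexHull_union {s t : Set E} (hs : IsCompact (convexHull ℝ s))
    (ht : IsCompact (convexHull ℝ t)) : IsCompact (convexHull ℝ (s ∪ t)) := by
  rcases s.eq_empty_or_nonempty with rfl | hs_ne
  · rwa [empty_union]
  rcases t.eq_empty_or_nonempty with rfl | ht_ne
  · rwa [union_empty]
  rw [_root_.convexHull_union hs_ne ht_ne]
  exact hs.convexJoin ht

theorem isCompact_convexHull_iUnion {ι : Type*} [Finite ι] {Ω : ι → Set E}
    (h : ∀ i, IsCompact (convexHull ℝ (Ω i))) : IsCompact (convexHull ℝ (⋃ i, Ω i)) := by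
  classical
  have := Fintype.ofFinite ι
  suffices ∀ s : Finset ι, IsCompact (convexHull ℝ (⋃ i ∈ s, Ω i)) by
    simpa using this Finset.univ
  intro s
  induction s using Finset.induction_on with
  | empty => simp
  | insert a s _ ih =>
    rw [Finset.set_biUnion_insert]
    exact (h a).convexHull_union ih

end ConvexHull

theorem Convex.exists_mem_forall_dist_le_dist {F : Type*} [NormedAddCommGroup F]
    [InnerProductSpace ℝ F] {K : Set F} (hK : Convex ℝ K) (hne : K.Nonempty)
    (hcomplete : IsComplete K) (x : F) : ∃ y ∈ K, ∀ z ∈ K, dist y z ≤ dist x z := by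
  obtain ⟨y, hyK, hy⟩ := exists_norm_eq_iInf_of_complete_convex hne hcomplete hK x
  refine ⟨y, hyK, fun z hz => ?_⟩
  have h_obtuse : inner ℝ (x - y) (z - y) ≤ 0 :=
    (norm_eq_iInf_iff_real_inner_le_zero hK hyK).1 hy z hz
  have h_sq : ‖x - z‖ ^ 2 = ‖x - y‖ ^ 2 - 2 * inner ℝ (x - y) (z - y) + ‖y - z‖ ^ 2 := by
    rw [show x - z = (x - y) + (y - z) by abel, norm_add_sq_real,
      show y - z = -(z - y) by abel, inner_neg_right, norm_neg]
    ring
  rw [dist_eq_norm, dist_eq_norm]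
  refine (pow_le_pow_iff_left₀ (norm_nonneg _) (norm_nonneg _) two_ne_zero).1 ?_
  linarith [sq_nonneg ‖x - y‖]

theorem Metric.infDist_le_infDist_of_forall_dist_le {X : Type*} [PseudoMetricSpace X]
    {s : Set X} {x y : X} (h : ∀ z ∈ s, dist y z ≤ dist x z) : infDist y s ≤ infDist x s := by
  rcases s.eq_empty_or_nonempty with rfl | hs
  · simp
  exact (le_infDist hs).2 fun z hz => (infDist_le_dist_of_mem hz).trans (h z hz)

theorem continuous_ciSup_of_finite {X α ι : Type*} [TopologicalSpace X]
    [ConditionallyCompleteLinearOrder α] [TopologicalSpace α] [OrderClosedTopology α] [Finite ι]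
    {f : ι → X → α} (hf : ∀ i, Continuous (f i)) : Continuous fun x => ⨆ i, f i x := by
  have := Fintype.ofFinite ι
  rcases isEmpty_or_nonempty ι with _ | _
  · simp only [iSup_of_empty']
    exact continuous_const
  simp only [← Finset.sup'_univ_eq_ciSup]
  exact Continuous.finset_sup'_apply Finset.univ_nonempty fun i _ => hf i

theorem IsCompact.exists_eq_ciInf_of_forall_exists_le {X α : Type*} [TopologicalSpace X]
    [ConditionallyCompleteLinearOrder α] [TopologicalSpace α] [OrderClosedTopology α]
    {f : X → α} {K : Set X} (hK : IsCompact K) (hne : K.Nonempty) (hf : ContinuousOn f K)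
    (h : ∀ x, ∃ y ∈ K, f y ≤ f x) : ∃ xs ∈ K, f xs = ⨅ x, f x := by
  obtain ⟨xs, hxsK, hmin⟩ := hK.exists_isMinOn hne hf
  have : Nonempty X := ⟨xs⟩
  have hleast : IsLeast (range f) (f xs) := ⟨mem_range_self xs, forall_mem_range.2 fun x =>
    let ⟨y, hyK, hy⟩ := h x; (hmin hyK).trans hy⟩
  exact ⟨xs, hxsK, hleast.isGLB.ciInf_eq.symm⟩

theorem exists_mem_iSup_infDist_eq_iInf {F ι : Type*} [NormedAddCommGroup F]
    [InnerProductSpace ℝ F] [Finite ι] {Ω : ι → Set F} {K : Set F} (hK : IsCompact K)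
    (hKconv : Convex ℝ K) (hKne : K.Nonempty) (hΩK : ∀ i, Ω i ⊆ K) :
    ∃ xs ∈ K, ⨆ i, infDist xs (Ω i) = ⨅ x, ⨆ i, infDist x (Ω i) := by
  refine hK.exists_eq_ciInf_of_forall_exists_le hKne
    (continuous_ciSup_of_finite fun i => continuous_infDist_pt (Ω i)).continuousOn fun x => ?_
  obtain ⟨y, hyK, hy⟩ := hKconv.exists_mem_forall_dist_le_dist hKne hK.isComplete x
  exact ⟨y, hyK, ciSup_mono (finite_range _).bddAbove fun i =>
    infDist_le_infDist_of_forall_dist_le fun z hz => hy z (hΩK i hz)⟩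

theorem sib_radius_attained_general (d n : ℕ) (hn : 0 < n)
    (Ω : Fin n → Set (EuclideanSpace ℝ (Fin d)))
    (hne : ∀ i, (Ω i).Nonempty) (hcpt : ∀ i, IsCompact (Ω i))
    (hconv : ∀ i, Convex ℝ (Ω i)) :
    ∃ xs ∈ convexHull ℝ (⋃ i, Ω i),
      (⨆ i, Metric.infDist xs (Ω i)) =
        ⨅ x : EuclideanSpace ℝ (Fin d), ⨆ i, Metric.infDist x (Ω i) := by
  have hΩK : ∀ i, Ω i ⊆ convexHull ℝ (⋃ i, Ω i) := fun i =>
    (subset_iUnion Ω i).trans (subset_convexHull ℝ _)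
  have hK : IsCompact (convexHull ℝ (⋃ i, Ω i)) :=
    isCompact_convexHull_iUnion fun i => by rw [(hconv i).convexHull_eq]; exact hcpt i
  exact exists_mem_iSup_infDist_eq_iInf hK (convex_convexHull ℝ _)
    ((hne ⟨0, hn⟩).mono (hΩK _)) hΩK

/-- **Attainment of the SIB radius.** The infimum `r* = inf_x max_i dist(x, Ωᵢ)` is
attained, at some point `x*` of the convex hull of `⋃ i, Ωᵢ`. -/
theorem sib_radius_attained (d n : ℕ) (hd : 0 < d) (hn : 0 < n)
    (Ω : Fin n → Set (EuclideanSpace ℝ (Fin d)))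
    (hne : ∀ i, (Ω i).Nonempty) (hcpt : ∀ i, IsCompact (Ω i))
    (hconv : ∀ i, Convex ℝ (Ω i)) :
    ∃ xs ∈ convexHull ℝ (⋃ i, Ω i),
      (⨆ i, Metric.infDist xs (Ω i)) =
        ⨅ x : EuclideanSpace ℝ (Fin d), ⨆ i, Metric.infDist x (Ω i) :=
  sib_radius_attained_general d n hn Ω hne hcpt hconv
end

section
/- Let d, n be positive integers and let Ω₁, …, Ωₙ be nonempty compact convex subsets of ℝ^d. Let X be the convex hull of ⋃ᵢ Ωᵢ, V = Ω₁ × ⋯ × Ωₙ, Y = { ((y₁,s₁),…,(yₙ,sₙ)) ∈ (ℝ^d × ℝ)^n : ‖yᵢ‖ ≤ sᵢ for all i, ∑ᵢ sᵢ = 1 }, and f(x, v, y) = ∑ᵢ ⟨x − vᵢ, yᵢ⟩. Then the value min over x ∈ X of max over (y, v) ∈ Y × V of f(x, v, y) equals R* := inf over x ∈ ℝ^d of max over i of sup over v ∈ Ωᵢ of ‖x − v‖ (the smallest enclosing ball radius). -/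
/-!
For fixed `x`, Cauchy–Schwarz bounds the payoff `∑ ⟪x - vᵢ, yᵢ⟫` by `∑ sᵢ ‖x - vᵢ‖`, hence by the
distance from `x` to the farthest point of `⋃ Ωᵢ`; putting all weight on one index `i` with `yᵢ` the
unit vector along `x - v` attains `‖x - v‖`. So the inner maximum is that farthest distance.
Restricting `x` to the convex hull `X` does not change its infimum: the projection of any `x` onto
the closure of `X` makes an obtuse angle with every point of `X`, so it is closer to all of them,
and the farthest distance is `1`-Lipschitz, so passing from the closure to `X` costs nothing.
-/

open RealInnerProductSpace

section FarthestDist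

variable {E ι : Type*} [SeminormedAddCommGroup E] {Ω : ι → Set E}

noncomputable def farthestDist (Ω : ι → Set E) (x : E) : ℝ := ⨆ i, ⨆ v : Ω i, ‖x - v.1‖

theorem farthestDist_nonneg (x : E) : 0 ≤ farthestDist Ω x :=
  Real.iSup_nonneg fun _ => Real.iSup_nonneg fun _ => norm_nonneg _

theorem norm_sub_le_farthestDist [Finite ι] (hΩ : ∀ i, Bornology.IsBounded (Ω i)) (x : E)
    {i : ι} {v : E} (hv : v ∈ Ω i) : ‖x - v‖ ≤ farthestDist Ω x := by
  obtain ⟨r, hr⟩ := (hΩ i).subset_closedBall x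
  have hbdd : BddAbove (Set.range fun w : Ω i => ‖x - w.1‖) := by
    refine ⟨r, Set.forall_mem_range.2 fun w => ?_⟩
    simpa [dist_eq_norm'] using hr w.2
  exact (le_ciSup hbdd ⟨v, hv⟩).trans
    (le_ciSup (f := fun j => ⨆ w : Ω j, ‖x - w.1‖) (Set.finite_range _).bddAbove i)

theorem farthestDist_le [Nonempty ι] (hne : ∀ i, (Ω i).Nonempty) {x : E} {r : ℝ}
    (h : ∀ i, ∀ v ∈ Ω i, ‖x - v‖ ≤ r) : farthestDist Ω x ≤ r :=
  ciSup_le fun i => have := (hne i).to_subtype; ciSup_le fun v => h i v v.2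

theorem lipschitzWith_farthestDist [Finite ι] [Nonempty ι] (hne : ∀ i, (Ω i).Nonempty)
    (hΩ : ∀ i, Bornology.IsBounded (Ω i)) : LipschitzWith 1 (farthestDist Ω) :=
  LipschitzWith.of_le_add fun a b => farthestDist_le hne fun i v hv =>
    calc ‖a - v‖ ≤ ‖b - v‖ + ‖a - b‖ :=
          (norm_sub_le_norm_sub_add_norm_sub a b v).trans_eq (add_comm _ _)
      _ ≤ farthestDist Ω b + dist a b := by
        rw [dist_eq_norm]; gcongr; exact norm_sub_le_farthestDist hΩ b hv

end FarthestDist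

section InnerProduct

variable {E ι : Type*} [NormedAddCommGroup E] [InnerProductSpace ℝ E] {Ω : ι → Set E}

theorem exists_norm_le_one_real_inner_eq_norm (u : E) : ∃ y : E, ‖y‖ ≤ 1 ∧ ⟪u, y⟫ = ‖u‖ := by
  rcases eq_or_ne u 0 with rfl | hu
  · exact ⟨0, by simp⟩
  · refine ⟨‖u‖⁻¹ • u, (norm_smul_inv_norm hu).le, ?_⟩
    rw [real_inner_smul_right, real_inner_self_eq_norm_sq, sq,
      inv_mul_cancel_left₀ (norm_ne_zero_iff.2 hu)]

theorem exists_mem_forall_norm_sub_le_norm_sub {K : Set E} (hne : K.Nonempty)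
    (hcpl : IsComplete K) (hconv : Convex ℝ K) (x : E) :
    ∃ p ∈ K, ∀ v ∈ K, ‖p - v‖ ≤ ‖x - v‖ := by
  obtain ⟨p, hpK, hpmin⟩ := exists_norm_eq_iInf_of_complete_convex hne hcpl hconv x
  have hobtuse := (norm_eq_iInf_iff_real_inner_le_zero hconv hpK).1 hpmin
  refine ⟨p, hpK, fun v hv => ?_⟩
  have hpyth : ‖x - v‖ ^ 2 = ‖x - p‖ ^ 2 - 2 * ⟪x - p, v - p⟫ + ‖p - v‖ ^ 2 := by
    rw [show x - v = (x - p) - (v - p) by abel, norm_sub_sq_real,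
      show v - p = -(p - v) by abel, norm_neg]
  refine (pow_le_pow_iff_left₀ (norm_nonneg _) (norm_nonneg _) two_ne_zero).1 ?_
  nlinarith [hobtuse v hv, sq_nonneg ‖x - p‖]

theorem iInf_subtype_farthestDist_eq [CompleteSpace E] [Finite ι] [Nonempty ι]
    (hne : ∀ i, (Ω i).Nonempty) (hΩ : ∀ i, Bornology.IsBounded (Ω i)) {K : Set E}
    (hconv : Convex ℝ K) (hΩK : ∀ i, Ω i ⊆ K) :
    ⨅ x : K, farthestDist Ω x = ⨅ x, farthestDist Ω x := by
  have hKne : K.Nonempty := (hne (Classical.arbitrary ι)).mono (hΩK _)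
  have := hKne.to_subtype
  have hbdd : ∀ {α : Type _} (f : α → E), BddBelow (Set.range fun a => farthestDist Ω (f a)) :=
    fun _ => ⟨0, Set.forall_mem_range.2 fun _ => farthestDist_nonneg _⟩
  refine le_antisymm (le_ciInf fun x => ?_) (le_ciInf fun x => ciInf_le ?_ x.1)
  · obtain ⟨p, hpK, hp⟩ := exists_mem_forall_norm_sub_le_norm_sub hKne.closure
      isClosed_closure.isComplete hconv.closure x
    have hclosure : closure K ⊆ {y | ⨅ x : K, farthestDist Ω x ≤ farthestDist Ω y} :=
      closure_minimal (fun y hy => ciInf_le (hbdd Subtype.val) (⟨y, hy⟩ : K))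
        (isClosed_le continuous_const (lipschitzWith_farthestDist hne hΩ).continuous)
    exact (hclosure hpK).trans <| farthestDist_le hne fun i v hv =>
      (hp v (subset_closure (hΩK i hv))).trans (norm_sub_le_farthestDist hΩ x hv)
  · exact hbdd id

end InnerProduct

section Game

variable {E ι : Type*} [NormedAddCommGroup E] [InnerProductSpace ℝ E] [Fintype ι]
  {Ω : ι → Set E}

/-- The strategy set `Y × V`, with `q.1 i = (yᵢ, sᵢ)` and `q.2 i = vᵢ`. -/
def gameStrategies (Ω : ι → Set E) : Set ((ι → E × ℝ) × (ι → E)) :=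
  {q | ((∀ i, ‖(q.1 i).1‖ ≤ (q.1 i).2) ∧ ∑ i, (q.1 i).2 = 1) ∧ ∀ i, q.2 i ∈ Ω i}

def gamePayoff (x : E) (q : (ι → E × ℝ) × (ι → E)) : ℝ := ∑ i, ⟪x - q.2 i, (q.1 i).1⟫

theorem gamePayoff_le_farthestDist (hΩ : ∀ i, Bornology.IsBounded (Ω i)) (x : E)
    {q : (ι → E × ℝ) × (ι → E)} (hq : q ∈ gameStrategies Ω) :
    gamePayoff x q ≤ farthestDist Ω x := by
  obtain ⟨⟨hy, hs⟩, hv⟩ := hq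
  calc gamePayoff x q ≤ ∑ i, farthestDist Ω x * (q.1 i).2 := by
        refine Finset.sum_le_sum fun i _ => (real_inner_le_norm _ _).trans ?_
        exact mul_le_mul (norm_sub_le_farthestDist hΩ x (hv i)) (hy i) (norm_nonneg _)
          (farthestDist_nonneg x)
    _ = farthestDist Ω x := by rw [← Finset.mul_sum, hs, mul_one]

theorem exists_gamePayoff_eq_norm_sub (hne : ∀ i, (Ω i).Nonempty) (x : E) {i : ι} {v : E}
    (hv : v ∈ Ω i) : ∃ q ∈ gameStrategies Ω, gamePayoff x q = ‖x - v‖ := by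
  classical
  obtain ⟨y, hy1, hy⟩ := exists_norm_le_one_real_inner_eq_norm (x - v)
  refine ⟨(fun j => ((Pi.single i y : ι → E) j, (Pi.single i 1 : ι → ℝ) j),
    Function.update (fun j => (hne j).some) i v), ⟨⟨fun j => ?_, ?_⟩, fun j => ?_⟩, ?_⟩
  · by_cases h : j = i
    · subst h; simpa using hy1
    · simp [h]
  · simp
  · by_cases h : j = i
    · subst h; simpa using hv
    · simpa [h] using (hne j).some_mem
  · rw [gamePayoff, Fintype.sum_eq_single i fun j hj => by simp [hj]]
    simpa using hy

theorem iSup_gamePayoff_eq_farthestDist [Nonempty ι] (hne : ∀ i, (Ω i).Nonempty)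
    (hΩ : ∀ i, Bornology.IsBounded (Ω i)) (x : E) :
    ⨆ q : gameStrategies Ω, gamePayoff x q.1 = farthestDist Ω x := by
  have hbdd : BddAbove (Set.range fun q : gameStrategies Ω => gamePayoff x q.1) :=
    ⟨farthestDist Ω x, Set.forall_mem_range.2 fun q => gamePayoff_le_farthestDist hΩ x q.2⟩
  obtain ⟨q₀, hq₀, -⟩ := exists_gamePayoff_eq_norm_sub hne x
    (hne (Classical.arbitrary ι)).some_mem
  have : Nonempty (gameStrategies Ω) := ⟨⟨q₀, hq₀⟩⟩
  refine le_antisymm (ciSup_le fun q => gamePayoff_le_farthestDist hΩ x q.2)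
    (farthestDist_le hne fun i v hv => ?_)
  obtain ⟨q, hq, hqv⟩ := exists_gamePayoff_eq_norm_sub hne x hv
  exact hqv ▸ le_ciSup hbdd ⟨q, hq⟩

end Game

theorem seb_game_value_general (d n : ℕ) (hn : 0 < n)
    (Ω : Fin n → Set (EuclideanSpace ℝ (Fin d)))
    (hne : ∀ i, (Ω i).Nonempty) (hcpt : ∀ i, IsCompact (Ω i)) :
    (⨅ x : {x : EuclideanSpace ℝ (Fin d) // x ∈ convexHull ℝ (⋃ i, Ω i)},
      ⨆ q : {q : (Fin n → (EuclideanSpace ℝ (Fin d)) × ℝ) ×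
          (Fin n → EuclideanSpace ℝ (Fin d)) //
        ((∀ i, ‖(q.1 i).1‖ ≤ (q.1 i).2) ∧ (∑ i, (q.1 i).2) = 1) ∧ ∀ i, q.2 i ∈ Ω i},
        ∑ i, (inner ℝ (x.1 - q.1.2 i) ((q.1.1 i).1) : ℝ)) =
    ⨅ x : EuclideanSpace ℝ (Fin d), ⨆ i, ⨆ v : (Ω i), ‖x - v.1‖ := by
  have : Nonempty (Fin n) := ⟨⟨0, hn⟩⟩
  have hΩ : ∀ i, Bornology.IsBounded (Ω i) := fun i => (hcpt i).isBounded
  calc _ = ⨅ x : convexHull ℝ (⋃ i, Ω i), farthestDist Ω x :=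
        iInf_congr fun x => iSup_gamePayoff_eq_farthestDist hne hΩ x.1
    _ = ⨅ x, farthestDist Ω x := iInf_subtype_farthestDist_eq hne hΩ (convex_convexHull ℝ _)
        fun i => (Set.subset_iUnion Ω i).trans (subset_convexHull ℝ _)

/-- **SEB as a zero-sum game (value).** The minimax value of the SEB game,
`min_{x ∈ X} max_{(y, v) ∈ Y × V} ∑ i ⟪x - vᵢ, yᵢ⟫`, equals the smallest
enclosing ball radius `R* = inf_x max_i sup_{v ∈ Ωᵢ} ‖x - v‖`. -/
theorem seb_game_value (d n : ℕ) (hd : 0 < d) (hn : 0 < n)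
    (Ω : Fin n → Set (EuclideanSpace ℝ (Fin d)))
    (hne : ∀ i, (Ω i).Nonempty) (hcpt : ∀ i, IsCompact (Ω i))
    (hconv : ∀ i, Convex ℝ (Ω i)) :
    (⨅ x : {x : EuclideanSpace ℝ (Fin d) // x ∈ convexHull ℝ (⋃ i, Ω i)},
      ⨆ q : {q : (Fin n → (EuclideanSpace ℝ (Fin d)) × ℝ) ×
          (Fin n → EuclideanSpace ℝ (Fin d)) //
        ((∀ i, ‖(q.1 i).1‖ ≤ (q.1 i).2) ∧ (∑ i, (q.1 i).2) = 1) ∧ ∀ i, q.2 i ∈ Ω i},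
        ∑ i, (inner ℝ (x.1 - q.1.2 i) ((q.1.1 i).1) : ℝ)) =
    ⨅ x : EuclideanSpace ℝ (Fin d), ⨆ i, ⨆ v : (Ω i), ‖x - v.1‖ :=
  seb_game_value_general d n hn Ω hne hcpt
end

section
/- Let d be a positive integer and let Ω₁, Ω₂ be nonempty compact convex subsets of ℝ^d. Then the SIB radius of the two sets satisfies r* = inf over x ∈ ℝ^d of max(dist(x, Ω₁), dist(x, Ω₂)) = (1/2) · inf over u ∈ Ω₁, v ∈ Ω₂ of ‖u − v‖, half the minimum distance between the two sets (half the length of the shortest connector). -/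
/-- **SIB of two convex sets is the shortest connector.** For nonempty compact convex
sets `Ω₁, Ω₂`, the SIB radius `r* = inf_x max (dist(x, Ω₁)) (dist(x, Ω₂))` equals half
the minimum distance `inf_{u ∈ Ω₁, v ∈ Ω₂} ‖u - v‖` between the two sets. -/
theorem sib_two_sets_shortest_connector (d : ℕ) (hd : 0 < d)
    (Ω₁ Ω₂ : Set (EuclideanSpace ℝ (Fin d)))
    (hne₁ : Ω₁.Nonempty) (hcpt₁ : IsCompact Ω₁) (hconv₁ : Convex ℝ Ω₁)
    (hne₂ : Ω₂.Nonempty) (hcpt₂ : IsCompact Ω₂) (hconv₂ : Convex ℝ Ω₂) :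
    (⨅ x : EuclideanSpace ℝ (Fin d), max (Metric.infDist x Ω₁) (Metric.infDist x Ω₂)) =
      (1 / 2) * ⨅ u : Ω₁, ⨅ v : Ω₂, ‖u.1 - v.1‖ := by
  haveI : Nonempty Ω₁ := hne₁.to_subtype
  haveI : Nonempty Ω₂ := hne₂.to_subtype
  have hbdd1 : BddBelow (Set.range fun x : EuclideanSpace ℝ (Fin d) =>
      max (Metric.infDist x Ω₁) (Metric.infDist x Ω₂)) := by
    refine ⟨0, ?_⟩
    rintro _ ⟨x, rfl⟩
    exact le_max_of_le_left Metric.infDist_nonneg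
  have hbddv : ∀ u : Ω₁, BddBelow (Set.range fun v : Ω₂ => ‖u.1 - v.1‖) := by
    intro u; exact ⟨0, by rintro _ ⟨v, rfl⟩; exact norm_nonneg _⟩
  have hbddu : BddBelow (Set.range fun u : Ω₁ => ⨅ v : Ω₂, ‖u.1 - v.1‖) := by
    refine ⟨0, ?_⟩
    rintro _ ⟨u, rfl⟩
    exact le_ciInf fun v => norm_nonneg _
  apply le_antisymm
  · rw [Real.mul_iInf_of_nonneg (by norm_num : (0:ℝ) ≤ 1/2)]
    refine le_ciInf fun u => ?_
    rw [Real.mul_iInf_of_nonneg (by norm_num : (0:ℝ) ≤ 1/2)]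
    refine le_ciInf fun v => ?_
    have := ciInf_le hbdd1 ((1/2 : ℝ) • (u.1 + v.1))
    refine this.trans ?_
    have hmu : ‖(1/2 : ℝ) • (u.1 + v.1) - u.1‖ = (1/2) * ‖u.1 - v.1‖ := by
      have : (1/2 : ℝ) • (u.1 + v.1) - u.1 = (1/2 : ℝ) • (v.1 - u.1) := by
        rw [smul_sub, smul_add]; module
      rw [this, norm_smul, norm_sub_rev]
      simp [abs_of_nonneg (by norm_num : (0:ℝ) ≤ (1/2:ℝ))]
    have hmv : ‖(1/2 : ℝ) • (u.1 + v.1) - v.1‖ = (1/2) * ‖u.1 - v.1‖ := by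
      have : (1/2 : ℝ) • (u.1 + v.1) - v.1 = (1/2 : ℝ) • (u.1 - v.1) := by
        rw [smul_sub, smul_add]; module
      rw [this, norm_smul]
      simp [abs_of_nonneg (by norm_num : (0:ℝ) ≤ (2:ℝ)⁻¹)]
    refine max_le ?_ ?_
    · calc Metric.infDist ((1/2 : ℝ) • (u.1 + v.1)) Ω₁ ≤ dist ((1/2 : ℝ) • (u.1 + v.1)) u.1 :=
            Metric.infDist_le_dist_of_mem u.2
        _ = (1/2) * ‖u.1 - v.1‖ := by rw [dist_eq_norm, hmu]
    · calc Metric.infDist ((1/2 : ℝ) • (u.1 + v.1)) Ω₂ ≤ dist ((1/2 : ℝ) • (u.1 + v.1)) v.1 :=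
            Metric.infDist_le_dist_of_mem v.2
        _ = (1/2) * ‖u.1 - v.1‖ := by rw [dist_eq_norm, hmv]
  · refine le_ciInf fun x => ?_
    obtain ⟨u, hu, hu'⟩ := hcpt₁.exists_infDist_eq_dist hne₁ x
    obtain ⟨v, hv, hv'⟩ := hcpt₂.exists_infDist_eq_dist hne₂ x
    have hD : (⨅ u : Ω₁, ⨅ v : Ω₂, ‖u.1 - v.1‖) ≤ ‖u - v‖ := by
      refine (ciInf_le hbddu ⟨u, hu⟩).trans (ciInf_le (hbddv ⟨u, hu⟩) ⟨v, hv⟩)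
    have htri : ‖u - v‖ ≤ dist x u + dist x v := by
      rw [dist_comm x u]
      calc ‖u - v‖ = dist u v := (dist_eq_norm u v).symm
        _ ≤ dist u x + dist x v := dist_triangle u x v
    have h1 : dist x u ≤ max (Metric.infDist x Ω₁) (Metric.infDist x Ω₂) := by
      rw [← hu']; exact le_max_left _ _
    have h2 : dist x v ≤ max (Metric.infDist x Ω₁) (Metric.infDist x Ω₂) := by
      rw [← hv']; exact le_max_right _ _
    nlinarith [hD.trans htri]
end
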